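/- Let D be a totally ordered integral domain, (S, ◁) and (T, ◁) proximity Baer-Specker D-algebras, and α : S → T a proximity morphism. If s ∈ S is written in decreasing form s = a_0 + Σ_{i=1}^n b_i e_i with e_1 ≥ ... ≥ e_n idempotents, a_0 ∈ D, and b_i > 0 in D for i ≥ 1, then α(s) = a_0 + Σ_{i=1}^n b_i α(e_i). -/

import Mathlib

open Finset

/-- A `D`-algebra `S` is torsion-free as a `D`-module. -/
def SpTorsionFree (D S : Type*) [CommRing D] [CommRing S] [Algebra D S] : Prop :=
  ∀ (a : D) (s : S), a • s = 0 → a = 0 ∨ s = 0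

/-- `S` is generated as a `D`-algebra by its idempotents. -/
def SpIdemGenerated (D S : Type*) [CommRing D] [CommRing S] [Algebra D S] : Prop :=
  Algebra.adjoin D {e : S | IsIdempotentElem e} = ⊤

/-- A Specker `D`-algebra: commutative unital, torsion-free, idempotent-generated. -/
def IsSpecker (D S : Type*) [CommRing D] [CommRing S] [Algebra D S] : Prop :=
  SpTorsionFree D S ∧ SpIdemGenerated D S

/-- The idempotents of `S`. -/
abbrev IdemOf (S : Type*) [Monoid S] := {e : S // IsIdempotentElem e}

/-- A full orthogonal decomposition of `s` with pairwise distinct coefficients and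
nonzero pairwise orthogonal idempotents summing (= joining) to `1`. -/
def FullOrthDecomp (D S : Type*) [CommRing D] [CommRing S] [Algebra D S] {n : ℕ}
    (a : Fin n → D) (e : Fin n → S) (s : S) : Prop :=
  Function.Injective a ∧ (∀ i, IsIdempotentElem (e i)) ∧ (∀ i, e i ≠ 0) ∧
    (∀ i j, i ≠ j → e i * e j = 0) ∧ (∑ i, e i = 1) ∧ s = ∑ i, a i • e i

/-- `s` has an orthogonal decomposition with nonnegative coefficients. -/
def OrthNonnegDecomp (D S : Type*) [CommRing D] [LinearOrder D] [IsStrictOrderedRing D] [CommRing S] [Algebra D S]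
    (s : S) : Prop :=
  ∃ (n : ℕ) (a : Fin n → D) (e : Fin n → S),
    (∀ i, 0 ≤ a i) ∧ (∀ i, IsIdempotentElem (e i)) ∧
    (∀ i j, i ≠ j → e i * e j = 0) ∧ s = ∑ i, a i • e i

/-- The canonical f-algebra order relation on a Specker algebra. -/
def specLE (D S : Type*) [CommRing D] [LinearOrder D] [IsStrictOrderedRing D] [CommRing S] [Algebra D S]
    (s t : S) : Prop :=
  OrthNonnegDecomp D S (t - s)

section Rel
variable {S : Type*}
def relUB (le : S → S → Prop) (A : Set S) (u : S) : Prop := ∀ x ∈ A, le x u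
def relLB (le : S → S → Prop) (A : Set S) (u : S) : Prop := ∀ x ∈ A, le u x
def relIsLUB (le : S → S → Prop) (A : Set S) (u : S) : Prop :=
  relUB le A u ∧ ∀ v, relUB le A v → le u v
def relIsGLB (le : S → S → Prop) (A : Set S) (u : S) : Prop :=
  relLB le A u ∧ ∀ v, relLB le A v → le v u
end Rel

/-- A function `D → B` belonging to Foster's boolean power `D[B]*`:
finitely valued, pairwise disjoint values, values join to `⊤`. -/
def IsBPFn (D B : Type*) [CommRing D] [BooleanAlgebra B] (f : D → B) : Prop :=
  (Set.range f).Finite ∧ (∀ a b : D, a ≠ b → f a ⊓ f b = ⊥) ∧ IsLUB (Set.range f) ⊤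

/-- Foster's boolean power `D[B]*` as a set of functions. -/
def DBStar (D B : Type*) [CommRing D] [BooleanAlgebra B] : Type _ :=
  {f : D → B // IsBPFn D B f}

/-- The boolean-power `D`-algebra operations on `D[B]*`, characterized via least upper bounds. -/
def FosterOps (D B : Type*) [CommRing D] [BooleanAlgebra B]
    [CommRing (DBStar D B)] [Algebra D (DBStar D B)] : Prop :=
  (∀ f g : DBStar D B, ∀ a : D,
      IsLUB {x : B | ∃ b c : D, b + c = a ∧ x = f.1 b ⊓ g.1 c} ((f + g).1 a)) ∧
  (∀ f g : DBStar D B, ∀ a : D,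
      IsLUB {x : B | ∃ b c : D, b * c = a ∧ x = f.1 b ⊓ g.1 c} ((f * g).1 a)) ∧
  (∀ (b : D) (f : DBStar D B) (a : D),
      IsLUB {x : B | ∃ c : D, b * c = a ∧ x = f.1 c} ((b • f).1 a))

/-- Decreasing step functions `D → B` determined by a chain `1 = e₀ > e₁ > ⋯ > eₙ > 0`
and thresholds `a₀ < a₁ < ⋯ < aₙ`. -/
def IsFlatFn (D B : Type*) [CommRing D] [LinearOrder D] [IsStrictOrderedRing D] [BooleanAlgebra B] (f : D → B) : Prop :=
  ∃ (n : ℕ) (a : Fin (n + 1) → D) (e : Fin (n + 1) → B),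
    StrictMono a ∧ StrictAnti e ∧ e 0 = ⊤ ∧ ⊥ < e (Fin.last n) ∧
    (∀ x : D, x ≤ a 0 → f x = ⊤) ∧
    (∀ (i : Fin n) (x : D), a i.castSucc < x → x ≤ a i.succ → f x = e i.succ) ∧
    (∀ x : D, a (Fin.last n) < x → f x = ⊥)

/-- The de Vries power `D[B]♭` as a set of decreasing step functions. -/
def DBFlat (D B : Type*) [CommRing D] [LinearOrder D] [IsStrictOrderedRing D] [BooleanAlgebra B] : Type _ :=
  {f : D → B // IsFlatFn D B f}

/-- A proximity on a torsion-free f-algebra over `D` (axioms (P1)–(P10)). -/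
def IsProximity (D S : Type*) [CommRing D] [LinearOrder D] [IsStrictOrderedRing D] [CommRing S] [Algebra D S]
    [Lattice S] (r : S → S → Prop) : Prop :=
  (r 0 0 ∧ r 1 1) ∧
  (∀ s t : S, r s t → s ≤ t) ∧
  (∀ s t u v : S, s ≤ t → r t u → u ≤ v → r s v) ∧
  (∀ s t u : S, r s t → r s u → r s (t ⊓ u)) ∧
  (∀ s t : S, r s t → r (-t) (-s)) ∧
  (∀ s t u v : S, r s t → r u v → r (s + u) (t + v)) ∧
  (∀ (s t : S) (a : D), 0 < a → r s t → r (a • s) (a • t)) ∧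
  (∀ s t : S, (∃ a : D, 0 < a ∧ r (a • s) (a • t)) → r s t) ∧
  (∀ s t u v : S, 0 ≤ s → 0 ≤ t → 0 ≤ u → 0 ≤ v → r s t → r u v → r (s * u) (t * v)) ∧
  (∀ s t : S, r s t → ∃ u, r s u ∧ r u t) ∧
  (∀ s : S, 0 < s → ∃ t, 0 < t ∧ r t s)

/-- A de Vries proximity on a boolean algebra. -/
def IsDeVriesProx (B : Type*) [BooleanAlgebra B] (p : B → B → Prop) : Prop :=
  (p ⊥ ⊥ ∧ p ⊤ ⊤) ∧
  (∀ a b : B, p a b → a ≤ b) ∧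
  (∀ a b c d : B, a ≤ b → p b c → c ≤ d → p a d) ∧
  (∀ a b c : B, p a b → p a c → p a (b ⊓ c)) ∧
  (∀ a b : B, p a b → p bᶜ aᶜ) ∧
  (∀ a b : B, p a b → ∃ c, p a c ∧ p c b) ∧
  (∀ a : B, a ≠ ⊥ → ∃ b, b ≠ ⊥ ∧ p b a)

/-- A Baer ring: the annihilator of every ideal is generated by an idempotent. -/
def IsBaer (S : Type*) [CommRing S] : Prop :=
  ∀ I : Ideal S, ∃ e : S, IsIdempotentElem e ∧
    ∀ r : S, (∀ s ∈ I, r * s = 0) ↔ ∃ x : S, r = x * e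

/-- Proximity morphisms between proximity (Baer-)Specker algebras (axioms (M1)–(M7)). -/
def IsProxMorphism (D S T : Type*) [CommRing D] [LinearOrder D] [IsStrictOrderedRing D]
    [CommRing S] [Algebra D S] [CommRing T] [Algebra D T] [Lattice S] [Lattice T]
    (rS : S → S → Prop) (rT : T → T → Prop) (α : S → T) : Prop :=
  α 0 = 0 ∧
  (∀ s t : S, α (s ⊓ t) = α s ⊓ α t) ∧
  (∀ s t : S, rS s t → rT (-(α (-s))) (α t)) ∧
  (∀ t : S, IsLUB {x : T | ∃ s : S, rS s t ∧ x = α s} (α t)) ∧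
  (∀ (s : S) (a : D), α (s + algebraMap D S a) = α s + algebraMap D T a) ∧
  (∀ (s : S) (a : D), 0 ≤ a → α (a • s) = a • α s) ∧
  (∀ (s : S) (a : D), α (s ⊔ algebraMap D S a) = α s ⊔ algebraMap D T a)

/-!
Induct on the length of the decreasing form `s = a₀ + Σ bᵢ eᵢ`. Put `c = a₀ + b₀`,
`m = a₀ + b₀ e₀`, `u = Σ_{i ≥ 1} bᵢ eᵢ` and `v = b₀ (1 - e₀)`, so `s = m + u` and `c = m + v`.
Since `eᵢ ≤ e₀` forces `eᵢ e₀ = eᵢ`, the nonnegative elements `u` and `v` are separated by the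
idempotent `1 - e₀`, hence `u ⊓ v = 0` and `u ⊔ v = u + v`. Thus `s ⊓ c = m` and `s ⊔ c = c + u`,
a decreasing form of smaller length. As `α` preserves `⊓ c` and `⊔ c`, the identity
`x ⊓ y + x ⊔ y = x + y` in `T` recovers `α s` from `α m = a₀ + b₀ α(e₀)` and the induction hypothesis.
-/

section SpeckerOrder

variable {D S : Type*} [CommRing D] [LinearOrder D] [IsStrictOrderedRing D]
  [CommRing S] [Algebra D S] [Lattice S]

theorem isOrderedAddMonoid_of_le_iff (hle : ∀ s t : S, s ≤ t ↔ OrthNonnegDecomp D S (t - s)) :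
    IsOrderedAddMonoid S :=
  { add_le_add_left := fun a b hab c => by rw [hle] at hab ⊢; simpa using hab }

theorem nonneg_iff_orthNonnegDecomp (hle : ∀ s t : S, s ≤ t ↔ OrthNonnegDecomp D S (t - s))
    (x : S) : 0 ≤ x ↔ OrthNonnegDecomp D S x := by
  rw [hle, sub_zero]

theorem smul_nonneg_of_isIdempotentElem (hle : ∀ s t : S, s ≤ t ↔ OrthNonnegDecomp D S (t - s))
    {b : D} {e : S} (hb : 0 ≤ b) (he : IsIdempotentElem e) : 0 ≤ b • e :=
  (nonneg_iff_orthNonnegDecomp hle _).2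
    ⟨1, fun _ => b, fun _ => e, fun _ => hb, fun _ => he,
      fun i j hij => absurd (Subsingleton.elim i j) hij, by simp⟩

theorem mul_nonneg_of_isIdempotentElem (hle : ∀ s t : S, s ≤ t ↔ OrthNonnegDecomp D S (t - s))
    {x h : S} (hx : 0 ≤ x) (hh : IsIdempotentElem h) : 0 ≤ x * h := by
  obtain ⟨n, a, f, ha, hf, horth, rfl⟩ := (nonneg_iff_orthNonnegDecomp hle x).1 hx
  refine (nonneg_iff_orthNonnegDecomp hle _).2 ⟨n, a, fun i => f i * h, ha, fun i => ?_,
    fun i j hij => ?_, by simp only [Finset.sum_mul, smul_mul_assoc]⟩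
  · exact (hf i).mul hh
  · rw [mul_mul_mul_comm, horth i j hij, zero_mul]

/-- In a torsion-free algebra `(1 + a) • x = 0` with `a ≥ 0` forces `x = 0`; applied to the pieces
of `f * (1 - e)` cut out by a decomposition of `e - f`, this shows `f * (1 - e) = 0`. -/
theorem mul_eq_left_of_le (hle : ∀ s t : S, s ≤ t ↔ OrthNonnegDecomp D S (t - s))
    (htf : SpTorsionFree D S) {e f : S} (he : IsIdempotentElem e) (hf : IsIdempotentElem f)
    (hfe : f ≤ e) : f * e = f := by
  obtain ⟨n, a, g, ha, hg, horth, hdiff⟩ := (hle f e).1 hfe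
  set q := f * (1 - e)
  have hq : q = -∑ i, a i • (g i * q) := by
    have : (e - f) * q = -q := by
      linear_combination (e - 1) * hf.eq - f * he.eq
    simp only [← smul_mul_assoc, ← Finset.sum_mul, ← hdiff, this, neg_neg]
  have hpiece : ∀ j, g j * q = 0 := by
    intro j
    have hgq : g j * q = -(a j • (g j * q)) := by
      conv_lhs => rw [hq]
      rw [mul_neg, Finset.mul_sum, Finset.sum_eq_single j]
      · rw [mul_smul_comm, ← mul_assoc, hg j]
      · intro i _ hij
        rw [mul_smul_comm, ← mul_assoc, horth j i hij.symm, zero_mul, smul_zero]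
      · simp
    have hsmul : (1 + a j) • (g j * q) = 0 := by
      rw [add_smul, one_smul]
      nth_rewrite 1 [hgq]
      exact neg_add_cancel _
    exact (htf _ _ hsmul).resolve_left (by linarith [ha j])
  have hq0 : q = 0 := by rw [hq]; simp [hpiece]
  linear_combination -hq0

theorem add_le_of_mul_isIdempotentElem (hle : ∀ s t : S, s ≤ t ↔ OrthNonnegDecomp D S (t - s))
    {u v w h : S} (huw : u ≤ w) (hvw : v ≤ w) (hh : IsIdempotentElem h)
    (huh : u * h = 0) (hvh : v * h = v) : u + v ≤ w := by
  have := isOrderedAddMonoid_of_le_iff hle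
  have hsplit : w - (u + v) = (w - v) * h + (w - u) * (1 - h) := by
    linear_combination hvh - huh
  rw [← sub_nonneg, hsplit]
  exact add_nonneg (mul_nonneg_of_isIdempotentElem hle (sub_nonneg.2 hvw) hh)
    (mul_nonneg_of_isIdempotentElem hle (sub_nonneg.2 huw) hh.one_sub)

theorem sup_eq_add_of_mul_isIdempotentElem
    (hle : ∀ s t : S, s ≤ t ↔ OrthNonnegDecomp D S (t - s)) {u v h : S} (hu : 0 ≤ u)
    (hv : 0 ≤ v) (hh : IsIdempotentElem h) (huh : u * h = 0) (hvh : v * h = v) :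
    u ⊔ v = u + v := by
  have := isOrderedAddMonoid_of_le_iff hle
  refine le_antisymm (sup_le (le_add_of_nonneg_right hv) (le_add_of_nonneg_left hu)) ?_
  exact add_le_of_mul_isIdempotentElem hle le_sup_left le_sup_right hh huh hvh

theorem inf_eq_zero_of_mul_isIdempotentElem
    (hle : ∀ s t : S, s ≤ t ↔ OrthNonnegDecomp D S (t - s)) {u v h : S} (hu : 0 ≤ u)
    (hv : 0 ≤ v) (hh : IsIdempotentElem h) (huh : u * h = 0) (hvh : v * h = v) :
    u ⊓ v = 0 := by
  have := isOrderedAddMonoid_of_le_iff hle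
  have := inf_add_sup u v
  rw [sup_eq_add_of_mul_isIdempotentElem hle hu hv hh huh hvh] at this
  simpa using this

theorem decreasingForm_inf_sup_algebraMap
    (hle : ∀ s t : S, s ≤ t ↔ OrthNonnegDecomp D S (t - s)) (htf : SpTorsionFree D S)
    {n : ℕ} (a0 : D) (b : Fin (n + 1) → D) (e : Fin (n + 1) → S) (hb : ∀ i, 0 < b i)
    (hidem : ∀ i, IsIdempotentElem (e i)) (hanti : Antitone e) :
    (algebraMap D S a0 + ∑ i, b i • e i) ⊓ algebraMap D S (a0 + b 0) =
        algebraMap D S a0 + b 0 • e 0 ∧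
      (algebraMap D S a0 + ∑ i, b i • e i) ⊔ algebraMap D S (a0 + b 0) =
        algebraMap D S (a0 + b 0) + ∑ i : Fin n, b i.succ • e i.succ := by
  have := isOrderedAddMonoid_of_le_iff hle
  set m := algebraMap D S a0 + b 0 • e 0
  set u := ∑ i : Fin n, b i.succ • e i.succ
  set v := b 0 • (1 - e 0)
  have hu : 0 ≤ u := Finset.sum_nonneg fun i _ =>
    smul_nonneg_of_isIdempotentElem hle (hb i.succ).le (hidem i.succ)
  have hv : 0 ≤ v := smul_nonneg_of_isIdempotentElem hle (hb 0).le (hidem 0).one_sub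
  have huh : u * (1 - e 0) = 0 := by
    refine (Finset.sum_mul ..).trans (Finset.sum_eq_zero fun i _ => ?_)
    rw [smul_mul_assoc, mul_sub, mul_one,
      mul_eq_left_of_le hle htf (hidem 0) (hidem i.succ) (hanti (Fin.zero_le _)), sub_self,
      smul_zero]
  have hvh : v * (1 - e 0) = v := by rw [smul_mul_assoc, (hidem 0).one_sub.eq]
  have hs : algebraMap D S a0 + ∑ i, b i • e i = m + u := by
    rw [Fin.sum_univ_succ, ← add_assoc]
  have hc : algebraMap D S (a0 + b 0) = m + v := by
    rw [map_add, Algebra.algebraMap_eq_smul_one (b 0)]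
    simp only [m, v, smul_sub]
    abel
  rw [hs, hc, ← add_inf, ← add_sup,
    inf_eq_zero_of_mul_isIdempotentElem hle hu hv (hidem 0).one_sub huh hvh,
    sup_eq_add_of_mul_isIdempotentElem hle hu hv (hidem 0).one_sub huh hvh]
  exact ⟨add_zero m, by abel⟩

end SpeckerOrder

namespace IsProxMorphism

variable {D S T : Type*} [CommRing D] [LinearOrder D] [IsStrictOrderedRing D]
  [CommRing S] [Algebra D S] [CommRing T] [Algebra D T] [Lattice S] [Lattice T]
  {rS : S → S → Prop} {rT : T → T → Prop} {α : S → T}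

theorem map_algebraMap (hα : IsProxMorphism D S T rS rT α) (a : D) :
    α (algebraMap D S a) = algebraMap D T a := by
  simpa [hα.1] using hα.2.2.2.2.1 0 a

theorem add_algebraMap_eq_map_inf_add_map_sup [IsOrderedAddMonoid T]
    (hα : IsProxMorphism D S T rS rT α) (s : S) (c : D) :
    α s + algebraMap D T c = α (s ⊓ algebraMap D S c) + α (s ⊔ algebraMap D S c) := by
  rw [hα.2.1, hα.2.2.2.2.2.2, hα.map_algebraMap, inf_add_sup]

theorem map_algebraMap_add_smul (hα : IsProxMorphism D S T rS rT α) (a : D) {b : D}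
    (hb : 0 ≤ b) (x : S) : α (algebraMap D S a + b • x) = algebraMap D T a + b • α x := by
  rw [add_comm, hα.2.2.2.2.1, hα.2.2.2.2.2.1 _ _ hb, add_comm]

theorem map_decreasingForm [IsOrderedAddMonoid T] (hα : IsProxMorphism D S T rS rT α)
    (hle : ∀ s t : S, s ≤ t ↔ OrthNonnegDecomp D S (t - s)) (htf : SpTorsionFree D S)
    {n : ℕ} (a0 : D) (b : Fin n → D) (e : Fin n → S) (hb : ∀ i, 0 < b i)
    (hidem : ∀ i, IsIdempotentElem (e i)) (hanti : Antitone e) :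
    α (algebraMap D S a0 + ∑ i, b i • e i) = algebraMap D T a0 + ∑ i, b i • α (e i) := by
  induction n generalizing a0 with
  | zero => simpa using hα.map_algebraMap a0
  | succ n ih =>
    obtain ⟨hinf, hsup⟩ := decreasingForm_inf_sup_algebraMap hle htf a0 b e hb hidem hanti
    have key := hα.add_algebraMap_eq_map_inf_add_map_sup
      (algebraMap D S a0 + ∑ i, b i • e i) (a0 + b 0)
    rw [hinf, hsup, hα.map_algebraMap_add_smul a0 (hb 0).le,
      ih _ (fun i => b i.succ) (fun i => e i.succ) (fun i => hb i.succ) (fun i => hidem i.succ)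
        (hanti.comp_monotone Fin.strictMono_succ.monotone)] at key
    conv_rhs => rw [Fin.sum_univ_succ]
    linear_combination key

end IsProxMorphism

theorem statement19_general (D S T : Type*) [CommRing D] [LinearOrder D] [IsStrictOrderedRing D]
    [CommRing S] [Algebra D S] [CommRing T] [Algebra D T]
    (hS : IsSpecker D S)
    [Lattice S] [Lattice T]
    (hleS : ∀ s t : S, s ≤ t ↔ OrthNonnegDecomp D S (t - s))
    (hleT : ∀ s t : T, s ≤ t ↔ OrthNonnegDecomp D T (t - s))
    (rS : S → S → Prop) (rT : T → T → Prop)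
    (α : S → T) (hα : IsProxMorphism D S T rS rT α)
    (s : S) (a0 : D) {n : ℕ} (b : Fin n → D) (e : Fin n → S)
    (hb : ∀ i, 0 < b i) (hidem : ∀ i, IsIdempotentElem (e i)) (hanti : Antitone e)
    (hs : s = algebraMap D S a0 + ∑ i, b i • e i) :
    α s = algebraMap D T a0 + ∑ i, b i • α (e i) := by
  have := isOrderedAddMonoid_of_le_iff hleT
  rw [hs]
  exact hα.map_decreasingForm hleS hS.1 a0 b e hb hidem hanti

/-- a proximity morphism applied to a decreasing form
`s = a₀ + Σ bᵢ eᵢ` gives `α(s) = a₀ + Σ bᵢ α(eᵢ)`. -/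
theorem statement19 (D S T : Type*) [CommRing D] [LinearOrder D] [IsStrictOrderedRing D]
    [CommRing S] [Algebra D S] [CommRing T] [Algebra D T]
    (hS : IsSpecker D S) (hT : IsSpecker D T) (hBS : IsBaer S) (hBT : IsBaer T)
    [Lattice S] [Lattice T]
    (hleS : ∀ s t : S, s ≤ t ↔ OrthNonnegDecomp D S (t - s))
    (hleT : ∀ s t : T, s ≤ t ↔ OrthNonnegDecomp D T (t - s))
    (rS : S → S → Prop) (rT : T → T → Prop)
    (hrS : IsProximity D S rS) (hrT : IsProximity D T rT)
    (α : S → T) (hα : IsProxMorphism D S T rS rT α)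
    (s : S) (a0 : D) {n : ℕ} (b : Fin n → D) (e : Fin n → S)
    (hb : ∀ i, 0 < b i) (hidem : ∀ i, IsIdempotentElem (e i)) (hanti : Antitone e)
    (hs : s = algebraMap D S a0 + ∑ i, b i • e i) :
    α s = algebraMap D T a0 + ∑ i, b i • α (e i) :=
  statement19_general D S T hS hleS hleT rS rT α hα s a0 b e hb hidem hanti hs
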